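/- The sequence n ↦ p(n,n) (for n ≥ 2, viewed as a sequence of real numbers) does not converge as n → ∞. Specifically, along the subsequence n = 2^{k+1} one has p(2^{k+1}, 2^{k+1}) → 2/3 as k → ∞, while along the subsequence n = ⌈(4/3)·2^k⌉ one has p(⌈(4/3)·2^k⌉, ⌈(4/3)·2^k⌉) → 5/8 as k → ∞; hence there is no real number L with p(n,n) → L. -/

import Mathlib

/-!
Put `V n m = n * m * p n m`. The recursion becomes `V n m = max (n * m - V m b - V m c)` over
splits `b + c = n`, and it has an explicit solution: if `M` is the largest power of two below
`m`, then `V m x` is, for `x ≤ M`, the upper envelope of the lines `line j`, and beyond `M` it is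
affine of slope `m`. The optimal split is `b = M` when `m` is at most the largest power of two
below `n`, and the balanced split otherwise; any other split is no better because the envelope
dominates each of its lines. On the diagonal this gives `p n n = 1 - v + 2/3 v² + O(1/n²)` with
`v = 2 ^ ⌊log₂ (n - 1)⌋ / n`, which depends on where `n` sits between two powers of two:
`v = 1/2` along `n = 2 ^ (k + 1)` while `v → 3/4` along `n = ⌈4/3 · 2 ^ k⌉`.
-/

open Filter Topology

namespace GuessWho

/-- `2 ^ logBelow n` is the largest power of two strictly below `n` (for `n ≥ 2`). -/
def logBelow (n : ℕ) : ℕ := Nat.log 2 (n - 1)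

lemma two_pow_logBelow_lt {n : ℕ} (hn : 2 ≤ n) : 2 ^ logBelow n < n := by
  have := Nat.pow_log_le_self 2 (show n - 1 ≠ 0 by omega)
  unfold logBelow
  omega

lemma two_pow_logBelow_le {n : ℕ} (hn : 1 ≤ n) : 2 ^ logBelow n ≤ n := by
  rcases hn.eq_or_lt with rfl | hn
  · simp [logBelow]
  · exact (two_pow_logBelow_lt hn).le

lemma le_two_pow_logBelow_succ (n : ℕ) : n ≤ 2 ^ (logBelow n + 1) := by
  have := Nat.lt_pow_succ_log_self one_lt_two (n - 1)
  unfold logBelow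
  omega

lemma logBelow_eq {n k : ℕ} (h₁ : 2 ^ k < n) (h₂ : n ≤ 2 ^ (k + 1)) : logBelow n = k :=
  Nat.log_eq_of_pow_le_of_lt_pow (by omega) (by omega)

lemma two_mul_two_pow_logBelow_le {m n : ℕ} (hm : 2 ≤ m) (h : m ≤ 2 ^ logBelow n) :
    2 * 2 ^ logBelow m ≤ 2 ^ logBelow n := by
  have hlt : logBelow m < logBelow n :=
    (Nat.pow_lt_pow_iff_right (by norm_num)).1 ((two_pow_logBelow_lt hm).trans_le h)
  rw [← pow_succ']
  exact Nat.pow_le_pow_right two_pos hlt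

lemma two_pow_logBelow_le_of_lt {m n : ℕ} (h : 2 ^ logBelow n < m) :
    2 ^ logBelow n ≤ 2 ^ logBelow m := by
  have hlt : logBelow n < logBelow m + 1 :=
    (Nat.pow_lt_pow_iff_right (by norm_num)).1 (h.trans_le (le_two_pow_logBelow_succ m))
  exact Nat.pow_le_pow_right two_pos (by omega)

def line (j : ℕ) (x : ℚ) : ℚ := 2 ^ j * x - ((2 ^ j) ^ 2 + 2) / 3

lemma line_sub_line (i j : ℕ) (x : ℚ) :
    line j x - line i x = (2 ^ j - 2 ^ i) * (x - (2 ^ i + 2 ^ j) / 3) := by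
  unfold line
  ring

lemma line_add_line (j : ℕ) (x y : ℚ) : line j x + line j y = 2 * line j ((x + y) / 2) := by
  unfold line
  ring

lemma line_succ (j : ℕ) (x : ℚ) : line (j + 1) x = 4 * line j (x / 2) + 2 := by
  unfold line
  ring

def envelope (b : ℕ) : ℚ := line (logBelow b + 1) b

lemma envelope_one : envelope 1 = 0 := by
  norm_num [envelope, logBelow, line]

lemma line_le_envelope (j : ℕ) {b : ℕ} (hb : 1 ≤ b) : line j b ≤ envelope b := by
  set L := logBelow b
  have hL : (2 : ℚ) ^ L ≤ b := by exact_mod_cast two_pow_logBelow_le hb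
  have hL' : (b : ℚ) ≤ 2 ^ L * 2 := by
    exact_mod_cast pow_succ 2 L ▸ le_two_pow_logBelow_succ b
  rw [← sub_nonneg, envelope, line_sub_line, pow_succ]
  rcases lt_trichotomy j (L + 1) with hj | rfl | hj
  · have : (2 : ℚ) ^ j ≤ 2 ^ L := pow_le_pow_right₀ one_le_two (by omega)
    exact mul_nonneg (by linarith) (by linarith)
  · rw [pow_succ, sub_self, zero_mul]
  · have : (2 : ℚ) ^ L * 2 * 2 ≤ 2 ^ j := by
      rw [← pow_succ, ← pow_succ]
      exact pow_le_pow_right₀ one_le_two hj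
    exact mul_nonneg_of_nonpos_of_nonpos (by linarith) (by linarith)

lemma envelope_eq_line {j b : ℕ} (h₁ : b ≤ 2 ^ j) (h₂ : 2 ^ j ≤ 2 * b) :
    envelope b = line j b := by
  have hb : 1 ≤ b := by have := Nat.one_le_two_pow (n := j); omega
  have hL := two_pow_logBelow_le hb
  have hL' := le_two_pow_logBelow_succ b
  rw [← sub_eq_zero, envelope, line_sub_line]
  generalize logBelow b = L at hL hL' ⊢
  rw [pow_succ] at hL'
  have hLj : L ≤ j := (Nat.pow_le_pow_iff_right one_lt_two).1 (hL.trans h₁)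
  have hjL : j ≤ L + 2 := (Nat.pow_le_pow_iff_right one_lt_two).1 (by rw [pow_add]; omega)
  obtain rfl | rfl | rfl : j = L ∨ j = L + 1 ∨ j = L + 2 := by omega
  · rw [show (b : ℚ) = 2 ^ j by exact_mod_cast (show b = 2 ^ j by omega)]
    ring
  · ring
  · rw [show (b : ℚ) = 2 ^ L * 2 by
      exact_mod_cast (show b = 2 ^ L * 2 by rw [pow_add] at h₂; omega)]
    ring

def balancedCost (n : ℕ) : ℚ := 2 * line (logBelow n) (n / 2)

lemma envelope_eq_balancedCost (m : ℕ) : envelope m = 2 * balancedCost m + 2 := by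
  rw [envelope, line_succ, balancedCost]
  ring

lemma line_add_balancedCost (m x : ℕ) :
    line (logBelow m) x + balancedCost m + 2 - m * x =
      (m - 2 ^ logBelow m) * (2 ^ logBelow m - x) := by
  unfold balancedCost line
  ring

lemma envelope_half_add_envelope_half {n : ℕ} (hn : 2 ≤ n) :
    envelope (n / 2) + envelope (n - n / 2) = balancedCost n := by
  have := two_pow_logBelow_lt hn
  have := le_two_pow_logBelow_succ n
  rw [pow_succ] at this
  rw [envelope_eq_line (j := logBelow n) (by omega) (by omega),
    envelope_eq_line (j := logBelow n) (by omega) (by omega), line_add_line, balancedCost]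
  push_cast [Nat.div_le_self]
  ring_nf

/-- Closed form of `n * m * p n m`. -/
def scaledValue (n m : ℕ) : ℚ :=
  if m ≤ 2 ^ logBelow n then envelope m else n * m - balancedCost n

lemma scaledValue_of_le {m x : ℕ} (h : x ≤ 2 ^ logBelow m) : scaledValue m x = envelope x :=
  if_pos h

lemma scaledValue_of_lt {m x : ℕ} (h : 2 ^ logBelow m < x) :
    scaledValue m x = m * x - balancedCost m :=
  if_neg h.not_ge

lemma sub_two_le_scaledValue {m x : ℕ} (hm : 1 ≤ m) (hx : 1 ≤ x) :
    m * x - balancedCost m - 2 ≤ scaledValue m x := by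
  rcases le_or_gt x (2 ^ logBelow m) with h | h
  · rw [scaledValue_of_le h]
    have hM : (2 : ℚ) ^ logBelow m ≤ m := by exact_mod_cast two_pow_logBelow_le hm
    have hxM : (x : ℚ) ≤ 2 ^ logBelow m := by exact_mod_cast h
    have := line_add_balancedCost m x
    have := line_le_envelope (logBelow m) hx
    nlinarith [mul_nonneg (sub_nonneg.2 hM) (sub_nonneg.2 hxM)]
  · rw [scaledValue_of_lt h]
    linarith

lemma line_le_scaledValue {j m x : ℕ} (hm : 2 ^ j < m) (hx : 1 ≤ x) :
    line j x ≤ scaledValue m x := by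
  rcases le_or_gt x (2 ^ logBelow m) with h | h
  · rw [scaledValue_of_le h]
    exact line_le_envelope j hx
  · rw [scaledValue_of_lt h, balancedCost]
    have hjm : j ≤ logBelow m := Nat.lt_succ_iff.1 <|
      (Nat.pow_lt_pow_iff_right (by norm_num)).1 (hm.trans_le (le_two_pow_logBelow_succ m))
    have hNM : (2 : ℚ) ^ j ≤ 2 ^ logBelow m := pow_le_pow_right₀ one_le_two hjm
    have hNm : (2 : ℚ) ^ j + 1 ≤ m := by exact_mod_cast hm
    have hMx : (2 : ℚ) ^ logBelow m + 1 ≤ x := by exact_mod_cast h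
    unfold line
    nlinarith [mul_nonneg (sub_nonneg.2 hNm) (sub_nonneg.2 hMx),
      mul_nonneg (sub_nonneg.2 hNM)
        (by linarith [pow_pos (two_pos (α := ℚ)) j] : (0 : ℚ) ≤ 2 * 2 ^ logBelow m - 2 ^ j)]

lemma sub_scaledValue_le {n m b c : ℕ} (hm : 2 ≤ m) (hb : 1 ≤ b) (hc : 1 ≤ c)
    (hbc : b + c = n) : n * m - scaledValue m b - scaledValue m c ≤ scaledValue n m := by
  have hnm : (n : ℚ) * m = m * b + m * c := by rw [← hbc]; push_cast; ring
  by_cases h : m ≤ 2 ^ logBelow n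
  · rw [scaledValue_of_le h, envelope_eq_balancedCost]
    have := two_mul_two_pow_logBelow_le hm h
    have := two_pow_logBelow_lt (n := n) (by omega)
    rcases le_or_gt c (2 ^ logBelow m) with hcM | hcM
    · rw [scaledValue_of_lt (show 2 ^ logBelow m < b by omega)]
      linarith [sub_two_le_scaledValue (by omega : 1 ≤ m) hc]
    · rw [scaledValue_of_lt hcM]
      linarith [sub_two_le_scaledValue (by omega : 1 ≤ m) hb]
  · rw [scaledValue_of_lt (not_le.1 h), balancedCost, ← show ((b + c : ℕ) : ℚ) / 2 = n / 2 by
      rw [hbc]]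
    push_cast
    linarith [line_le_scaledValue (not_le.1 h) hb, line_le_scaledValue (not_le.1 h) hc,
      line_add_line (logBelow n) b c]

lemma exists_sub_scaledValue_eq {n m : ℕ} (hn : 2 ≤ n) (hm : 2 ≤ m) :
    ∃ b c, 1 ≤ b ∧ 1 ≤ c ∧ b + c = n ∧
      n * m - scaledValue m b - scaledValue m c = scaledValue n m := by
  have hN := two_pow_logBelow_lt hn
  by_cases h : m ≤ 2 ^ logBelow n
  · have hM := two_mul_two_pow_logBelow_le hm h
    refine ⟨2 ^ logBelow m, n - 2 ^ logBelow m, Nat.one_le_two_pow, by omega, by omega, ?_⟩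
    rw [scaledValue_of_le le_rfl, envelope_eq_line le_rfl (by omega),
      scaledValue_of_lt (by omega), scaledValue_of_le h, envelope_eq_balancedCost]
    have := line_add_balancedCost m (2 ^ logBelow m)
    push_cast [show 2 ^ logBelow m ≤ n by omega] at this ⊢
    rw [sub_self, mul_zero] at this
    linarith
  · have hNM := two_pow_logBelow_le_of_lt (not_le.1 h)
    have := le_two_pow_logBelow_succ n
    rw [pow_succ] at this
    refine ⟨n / 2, n - n / 2, by omega, by omega, by omega, ?_⟩
    rw [scaledValue_of_lt (not_le.1 h), scaledValue_of_le (by omega),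
      scaledValue_of_le (by omega), sub_sub, envelope_half_add_envelope_half hn]

lemma scaledValue_eq_sup' {n m : ℕ} (hn : 2 ≤ n) (hm : 2 ≤ m) :
    scaledValue n m =
      (Finset.Icc 1 (n - 1)).sup' (Finset.nonempty_Icc.mpr (Nat.le_sub_one_of_lt hn))
        (fun b => n * m - scaledValue m b - scaledValue m (n - b)) := by
  apply le_antisymm
  · obtain ⟨b, c, hb, hc, rfl, heq⟩ := exists_sub_scaledValue_eq hn hm
    refine heq.symm.le.trans (Finset.le_sup'_of_le _ (Finset.mem_Icc.2 ⟨hb, by omega⟩) ?_)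
    rw [Nat.add_sub_cancel_left]
  · refine Finset.sup'_le _ _ fun b hb => ?_
    obtain ⟨hb, hbn⟩ := Finset.mem_Icc.1 hb
    exact sub_scaledValue_le hm hb (by omega) (by omega)

section

variable {p : ℕ → ℕ → ℚ} (hp2 : ∀ n : ℕ, 2 ≤ n → p n 1 = 0)
    (hrec : ∀ n m : ℕ, ∀ hn : 2 ≤ n, 2 ≤ m →
      p n m = (Finset.Icc 1 (n - 1)).sup' (Finset.nonempty_Icc.mpr (Nat.le_sub_one_of_lt hn))
        (fun b => 1 - (b : ℚ) / (n : ℚ) * p m b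
          - ((n - b : ℕ) : ℚ) / (n : ℚ) * p m (n - b)))
include hp2 hrec

theorem eq_scaledValue_div {n m : ℕ} (hn : 2 ≤ n) (hm : 1 ≤ m) :
    p n m = scaledValue n m / (n * m) := by
  induction hs : n + m using Nat.strong_induction_on generalizing n m with
  | _ s ih =>
  rcases hm.eq_or_lt with rfl | hm
  · rw [hp2 n hn, scaledValue_of_le Nat.one_le_two_pow, envelope_one, zero_div]
  · rw [hrec n m hn hm, scaledValue_eq_sup' hn hm, Finset.sup'_div₀ (by positivity)]
    refine Finset.sup'_congr _ rfl fun b hb => ?_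
    obtain ⟨hb, hbn⟩ := Finset.mem_Icc.1 hb
    rw [ih (m + b) (by omega) hm (by omega) rfl, ih (m + (n - b)) (by omega) hm (by omega) rfl]
    have : ((n - b : ℕ) : ℚ) ≠ 0 := by norm_cast; omega
    field_simp

lemma diag_eq {n : ℕ} (hn : 2 ≤ n) :
    (p n n : ℝ) =
      1 - 2 ^ logBelow n / n + 2 / 3 * (2 ^ logBelow n / n) ^ 2 + 4 / 3 * (1 / n) ^ 2 := by
  rw [eq_scaledValue_div hp2 hrec hn (by omega), scaledValue_of_lt (two_pow_logBelow_lt hn),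
    balancedCost, line]
  have : (n : ℝ) ≠ 0 := by positivity
  push_cast
  field_simp
  ring

theorem tendsto_diag {u : ℕ → ℕ} {v : ℝ} (hu : ∀ k, 2 ^ k < u k ∧ u k ≤ 2 ^ (k + 1))
    (hv : Tendsto (fun k => (2 : ℝ) ^ k / u k) atTop (𝓝 v)) :
    Tendsto (fun k => (p (u k) (u k) : ℝ)) atTop (𝓝 (1 - v + 2 / 3 * v ^ 2)) := by
  have hinv : Tendsto (fun k => 1 / (u k : ℝ)) atTop (𝓝 0) := by
    have := hv.mul (tendsto_pow_atTop_nhds_zero_of_lt_one (r := (1 / 2 : ℝ)) (by norm_num)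
      (by norm_num))
    rw [mul_zero] at this
    refine this.congr fun k => ?_
    rw [div_pow, one_pow]
    field_simp
  have hlim := (((tendsto_const_nhds (x := (1 : ℝ))).sub hv).add
    ((hv.pow 2).const_mul (2 / 3))).add ((hinv.pow 2).const_mul (4 / 3))
  rw [show (0 : ℝ) ^ 2 = 0 by norm_num, mul_zero, add_zero] at hlim
  refine hlim.congr fun k => ?_
  rw [diag_eq hp2 hrec (by have := (hu k).1; have := Nat.one_le_two_pow (n := k); omega),
    logBelow_eq (hu k).1 (hu k).2]

end

lemma ceil_four_thirds_mul_two_pow_mem (k : ℕ) :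
    2 ^ k < ⌈(4 / 3 : ℚ) * 2 ^ k⌉₊ ∧ ⌈(4 / 3 : ℚ) * 2 ^ k⌉₊ ≤ 2 ^ (k + 1) := by
  have : (0 : ℚ) < 2 ^ k := by positivity
  refine ⟨Nat.lt_ceil.2 ?_, Nat.ceil_le.2 ?_⟩ <;> push_cast [pow_succ] <;> linarith

lemma tendsto_two_pow_div_ceil :
    Tendsto (fun k => (2 : ℝ) ^ k / ⌈(4 / 3 : ℚ) * 2 ^ k⌉₊) atTop (𝓝 (3 / 4)) := by
  have := ((tendsto_nat_ceil_mul_div_atTop (a := (4 / 3 : ℝ)) (by norm_num)).comp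
    (tendsto_pow_atTop_atTop_of_one_lt one_lt_two)).inv₀ (by norm_num)
  rw [show (4 / 3 : ℝ)⁻¹ = 3 / 4 by norm_num] at this
  refine this.congr fun k => ?_
  rw [Function.comp_apply, inv_div, show (4 / 3 : ℝ) * 2 ^ k = ((4 / 3 * 2 ^ k : ℚ) : ℝ) by
    push_cast; ring, ← Int.ceil_toNat, Rat.ceil_cast, Int.ceil_toNat]

lemma tendsto_atTop_of_two_pow_lt {u : ℕ → ℕ} (hu : ∀ k, 2 ^ k < u k) :
    Tendsto u atTop atTop :=
  tendsto_atTop_mono (fun k => k.lt_two_pow_self.le.trans (hu k).le) tendsto_id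

end GuessWho

open GuessWho

/-- Log-periodicity of "Guess Who?": the sequence `n ↦ p n n` (as real numbers) does
not converge. Along `n = 2^(k+1)` it tends to `2/3`, along `n = ⌈(4/3)·2^k⌉` it tends
to `5/8`, hence there is no limit `L`. -/
theorem guess_who_diagonal_not_convergent
    (p : ℕ → ℕ → ℚ)
    (hp2 : ∀ n : ℕ, 2 ≤ n → p n 1 = 0)
    (hrec : ∀ n m : ℕ, ∀ hn : 2 ≤ n, 2 ≤ m →
      p n m = (Finset.Icc 1 (n - 1)).sup' (Finset.nonempty_Icc.mpr (by omega))
        (fun b => 1 - (b : ℚ) / (n : ℚ) * p m b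
          - ((n - b : ℕ) : ℚ) / (n : ℚ) * p m (n - b))) :
    Tendsto (fun k : ℕ => (p (2 ^ (k + 1)) (2 ^ (k + 1)) : ℝ)) atTop (nhds (2 / 3)) ∧
    Tendsto (fun k : ℕ =>
      (p ⌈(4 / 3 : ℚ) * 2 ^ k⌉₊ ⌈(4 / 3 : ℚ) * 2 ^ k⌉₊ : ℝ)) atTop (nhds (5 / 8)) ∧
    ¬ ∃ L : ℝ, Tendsto (fun n : ℕ => (p n n : ℝ)) atTop (nhds L) := by
  have hpow : ∀ k, 2 ^ k < 2 ^ (k + 1) ∧ 2 ^ (k + 1) ≤ 2 ^ (k + 1) :=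
    fun k => ⟨Nat.pow_lt_pow_right one_lt_two k.lt_succ_self, le_rfl⟩
  have h₁ := tendsto_diag hp2 hrec hpow (v := 1 / 2) <| tendsto_const_nhds.congr fun k => by
    rw [pow_succ]; push_cast; field_simp
  have h₂ := tendsto_diag hp2 hrec ceil_four_thirds_mul_two_pow_mem tendsto_two_pow_div_ceil
  norm_num at h₁ h₂
  refine ⟨h₁, h₂, fun ⟨L, hL⟩ => ?_⟩
  have e₁ := tendsto_nhds_unique
    (hL.comp (tendsto_atTop_of_two_pow_lt fun k => (hpow k).1)) h₁
  have e₂ := tendsto_nhds_unique (hL.comp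
    (tendsto_atTop_of_two_pow_lt fun k => (ceil_four_thirds_mul_two_pow_mem k).1)) h₂
  norm_num [e₁] at e₂
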